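/- Let d ≥ 1 and a ≥ 0, let g be the heat kernel in dimension d, and fix T > 0. Then the function x ↦ ∫₀^T ∫_{ℝ^d} g(s, x-y)^p |y|^a dy ds (for 0 < p < 1+2/d) grows at most polynomially in |x|: there exist constants C > 0 and m ≥ 0 such that this function is bounded by C(1+|x|)^m for all x ∈ ℝ^d. -/

import Mathlib

/-!
For `0 < s ≤ T`, `g(s, ·)^p` is `(4πs)^{-dp/2}` times the Gaussian `exp(-p|z|²/(4s))`. Half of
that Gaussian absorbs the weight: `|y|^a ≤ (1+|x|)^a (1+|x-y|)^a` and
`(1+u)^a ≤ e^{au} ≤ e^{2a²s/p} e^{pu²/(8s)}`. The other half integrates to a constant times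
`s^{d/2}`, so the inner integral is `O((1+|x|)^a s^{d(1-p)/2})`, and `d(1-p)/2 > -1` is exactly
`p < 1 + 2/d`.
-/
open MeasureTheory Real

noncomputable def heatKernel (d : ℕ) (t : ℝ) (x : EuclideanSpace ℝ (Fin d)) : ℝ :=
  if 0 < t then (4 * π * t) ^ (-(d : ℝ) / 2) * exp (-‖x‖ ^ 2 / (4 * t)) else 0

lemma norm_rpow_le_one_add_norm_rpow_mul {E : Type*} [SeminormedAddGroup E] {a : ℝ}
    (ha : 0 ≤ a) (x y : E) : ‖y‖ ^ a ≤ (1 + ‖x‖) ^ a * (1 + ‖x - y‖) ^ a := by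
  rw [← mul_rpow (by positivity) (by positivity)]
  refine rpow_le_rpow (norm_nonneg y) ?_ ha
  nlinarith [norm_le_norm_add_norm_sub x y, mul_nonneg (norm_nonneg x) (norm_nonneg (x - y))]

lemma one_add_rpow_le_exp {a c u : ℝ} (ha : 0 ≤ a) (hc : 0 < c) (hu : -1 ≤ u) :
    (1 + u) ^ a ≤ exp (a ^ 2 / (4 * c) + c * u ^ 2) :=
  calc (1 + u) ^ a ≤ exp u ^ a := by
        gcongr
        · linarith
        · linarith [add_one_le_exp u]
    _ = exp (a * u) := by rw [← exp_mul, mul_comm]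
    _ ≤ exp (a ^ 2 / (4 * c) + c * u ^ 2) := by
        gcongr
        have : 0 ≤ c * (u - a / (2 * c)) ^ 2 := by positivity
        have e : c * (u - a / (2 * c)) ^ 2 = a ^ 2 / (4 * c) + c * u ^ 2 - a * u := by
          field_simp; ring
        linarith

lemma heatKernel_rpow {d : ℕ} {s : ℝ} (hs : 0 < s) (p : ℝ) (z : EuclideanSpace ℝ (Fin d)) :
    heatKernel d s z ^ p = (4 * π * s) ^ (-(d : ℝ) * p / 2) * exp (-(p / (4 * s)) * ‖z‖ ^ 2) := by
  rw [heatKernel, if_pos hs, mul_rpow (by positivity) (exp_pos _).le, ← rpow_mul (by positivity),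
    ← exp_mul]
  congr 2 <;> ring

lemma lintegral_exp_neg_mul_norm_sub_sq {V : Type*} [NormedAddCommGroup V] [InnerProductSpace ℝ V]
    [FiniteDimensional ℝ V] [MeasurableSpace V] [BorelSpace V] {b : ℝ} (hb : 0 < b) (x : V) :
    ∫⁻ y, ENNReal.ofReal (exp (-b * ‖x - y‖ ^ 2)) =
      ENNReal.ofReal ((π / b) ^ ((Module.finrank ℝ V : ℝ) / 2)) := by
  have hint := GaussianFourier.integral_rexp_neg_mul_sq_norm (V := V) hb
  simp_rw [norm_sub_rev x]
  rw [lintegral_sub_right_eq_self (fun z => ENNReal.ofReal (exp (-b * ‖z‖ ^ 2))) x,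
    ← hint, ofReal_integral_eq_lintegral_ofReal
      (.of_integral_ne_zero (by rw [hint]; positivity)) (.of_forall fun _ => (exp_pos _).le)]

lemma setLIntegral_rpow_Ioc_zero {r T : ℝ} (hr : -1 < r) (hT : 0 ≤ T) :
    ∫⁻ s in Set.Ioc 0 T, ENNReal.ofReal (s ^ r) = ENNReal.ofReal (T ^ (r + 1) / (r + 1)) := by
  rw [← ofReal_integral_eq_lintegral_ofReal (intervalIntegral.intervalIntegrable_rpow' hr).1
      ((ae_restrict_iff' measurableSet_Ioc).mpr (.of_forall fun s hs => rpow_nonneg hs.1.le r)),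
    ← intervalIntegral.integral_of_le hT, integral_rpow (.inl hr),
    zero_rpow (by linarith), sub_zero]

lemma heatKernel_rpow_mul_rpow_norm_le {d : ℕ} {a p s : ℝ} (ha : 0 ≤ a) (hp : 0 < p) (hs : 0 < s)
    (x y : EuclideanSpace ℝ (Fin d)) :
    heatKernel d s (x - y) ^ p * ‖y‖ ^ a ≤
      exp (2 * a ^ 2 * s / p) * (1 + ‖x‖) ^ a *
        ((4 * π * s) ^ (-(d : ℝ) * p / 2) * exp (-(p / (8 * s)) * ‖x - y‖ ^ 2)) := by
  have hc : 0 < p / (8 * s) := by positivity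
  have hexp : exp (-(p / (4 * s)) * ‖x - y‖ ^ 2) *
      exp (a ^ 2 / (4 * (p / (8 * s))) + p / (8 * s) * ‖x - y‖ ^ 2) =
      exp (2 * a ^ 2 * s / p) * exp (-(p / (8 * s)) * ‖x - y‖ ^ 2) := by
    rw [← exp_add, ← exp_add]
    congr 1
    field_simp
    ring
  calc heatKernel d s (x - y) ^ p * ‖y‖ ^ a
      ≤ (4 * π * s) ^ (-(d : ℝ) * p / 2) * exp (-(p / (4 * s)) * ‖x - y‖ ^ 2) *
          ((1 + ‖x‖) ^ a * exp (a ^ 2 / (4 * (p / (8 * s))) + p / (8 * s) * ‖x - y‖ ^ 2)) := by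
        rw [heatKernel_rpow hs]
        gcongr
        calc ‖y‖ ^ a ≤ (1 + ‖x‖) ^ a * (1 + ‖x - y‖) ^ a :=
              norm_rpow_le_one_add_norm_rpow_mul ha x y
          _ ≤ _ := by gcongr; exact one_add_rpow_le_exp ha hc (by linarith [norm_nonneg (x - y)])
    _ = _ := by linear_combination (4 * π * s) ^ (-(d : ℝ) * p / 2) * (1 + ‖x‖) ^ a * hexp

lemma lintegral_heatKernel_rpow_mul_rpow_norm_le {d : ℕ} {a p s : ℝ} (ha : 0 ≤ a) (hp : 0 < p)
    (hs : 0 < s) (x : EuclideanSpace ℝ (Fin d)) :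
    ∫⁻ y, ENNReal.ofReal (heatKernel d s (x - y) ^ p * ‖y‖ ^ a) ≤
      ENNReal.ofReal (exp (2 * a ^ 2 * s / p) * (4 * π) ^ (-(d : ℝ) * p / 2) *
        (8 * π / p) ^ ((d : ℝ) / 2) * (1 + ‖x‖) ^ a * s ^ ((d : ℝ) * (1 - p) / 2)) := by
  set K := exp (2 * a ^ 2 * s / p) * (1 + ‖x‖) ^ a * (4 * π * s) ^ (-(d : ℝ) * p / 2) with hK_def
  have hK : 0 ≤ K := by positivity
  calc ∫⁻ y, ENNReal.ofReal (heatKernel d s (x - y) ^ p * ‖y‖ ^ a)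
      ≤ ∫⁻ y, ENNReal.ofReal K * ENNReal.ofReal (exp (-(p / (8 * s)) * ‖x - y‖ ^ 2)) :=
        lintegral_mono fun y => by
          rw [← ENNReal.ofReal_mul hK, mul_assoc]
          exact ENNReal.ofReal_le_ofReal (heatKernel_rpow_mul_rpow_norm_le ha hp hs x y)
    _ = ENNReal.ofReal (K * (π / (p / (8 * s))) ^ ((d : ℝ) / 2)) := by
        rw [lintegral_const_mul' _ _ ENNReal.ofReal_ne_top,
          lintegral_exp_neg_mul_norm_sub_sq (by positivity), finrank_euclideanSpace_fin,
          ← ENNReal.ofReal_mul hK]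
    _ = _ := by
        congr 1
        rw [hK_def, show π / (p / (8 * s)) = 8 * π / p * s by field_simp,
          mul_rpow (by positivity) hs.le, mul_rpow (by positivity) hs.le,
          show (d : ℝ) * (1 - p) / 2 = -(d : ℝ) * p / 2 + (d : ℝ) / 2 by ring, rpow_add hs]
        ring

theorem heat_kernel_power_poly_growth_general (d : ℕ)
    (g : ℝ → EuclideanSpace ℝ (Fin d) → ℝ)
    (hg : ∀ t x, g t x = if 0 < t then (4 * π * t) ^ (-(d : ℝ) / 2) * exp (-‖x‖ ^ 2 / (4 * t))
      else 0)
    (a : ℝ) (ha : 0 ≤ a) (T : ℝ) (hT : 0 < T)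
    (p : ℝ) (hp : 0 < p) (hp' : p < 1 + 2 / d) :
    ∃ C > (0 : ℝ), ∃ m ≥ (0 : ℝ), ∀ x : EuclideanSpace ℝ (Fin d),
      (∫⁻ s in Set.Ioc (0 : ℝ) T, ∫⁻ y : EuclideanSpace ℝ (Fin d),
          ENNReal.ofReal (g s (x - y) ^ p * ‖y‖ ^ a))
        ≤ ENNReal.ofReal (C * (1 + ‖x‖) ^ m) := by
  obtain rfl : g = heatKernel d := funext₂ hg
  have hdp : (d : ℝ) * p < d + 2 := by
    rcases (Nat.cast_nonneg d : (0 : ℝ) ≤ d).eq_or_lt with hd | hd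
    · rw [← hd]; norm_num
    · simpa [mul_add, mul_div_cancel₀ _ hd.ne'] using mul_lt_mul_of_pos_left hp' hd
  have hα : -1 < (d : ℝ) * (1 - p) / 2 := by linarith
  set α := (d : ℝ) * (1 - p) / 2
  set B := exp (2 * a ^ 2 * T / p) * (4 * π) ^ (-(d : ℝ) * p / 2) * (8 * π / p) ^ ((d : ℝ) / 2)
    with hB
  have hα1 : 0 < α + 1 := by linarith
  refine ⟨B * (T ^ (α + 1) / (α + 1)), by positivity, a, ha, fun x => ?_⟩
  calc _ ≤ ∫⁻ s in Set.Ioc 0 T, ENNReal.ofReal (B * (1 + ‖x‖) ^ a) * ENNReal.ofReal (s ^ α) := by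
        refine setLIntegral_mono (by fun_prop) fun s ⟨hs, hsT⟩ => ?_
        rw [← ENNReal.ofReal_mul (by positivity)]
        refine (lintegral_heatKernel_rpow_mul_rpow_norm_le ha hp hs x).trans ?_
        rw [hB]
        gcongr
    _ = ENNReal.ofReal (B * (T ^ (α + 1) / (α + 1)) * (1 + ‖x‖) ^ a) := by
        rw [lintegral_const_mul' _ _ ENNReal.ofReal_ne_top, setLIntegral_rpow_Ioc_zero hα hT.le,
          ← ENNReal.ofReal_mul (by positivity), mul_right_comm]

/-- The function `x ↦ ∫₀^T ∫_{ℝ^d} g(s, x-y)^p |y|^a dy ds` grows at most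
polynomially in `|x|`. -/
theorem heat_kernel_power_poly_growth (d : ℕ) (hd : 1 ≤ d)
    (g : ℝ → EuclideanSpace ℝ (Fin d) → ℝ)
    (hg : ∀ t x, g t x = if 0 < t then (4 * π * t) ^ (-(d : ℝ) / 2) * exp (-‖x‖ ^ 2 / (4 * t))
      else 0)
    (a : ℝ) (ha : 0 ≤ a) (T : ℝ) (hT : 0 < T)
    (p : ℝ) (hp : 0 < p) (hp' : p < 1 + 2 / d) :
    ∃ C > (0 : ℝ), ∃ m ≥ (0 : ℝ), ∀ x : EuclideanSpace ℝ (Fin d),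
      (∫⁻ s in Set.Ioc (0 : ℝ) T, ∫⁻ y : EuclideanSpace ℝ (Fin d),
          ENNReal.ofReal (g s (x - y) ^ p * ‖y‖ ^ a))
        ≤ ENNReal.ofReal (C * (1 + ‖x‖) ^ m) :=
  heat_kernel_power_poly_growth_general d g hg a ha T hT p hp hp'
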